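/- arXiv:1604.06924 — 3 statements merged into one kernel-verified Lean document; each statement's English description precedes it below -/
import Mathlib

section
/- Let E, F be real Banach spaces, δ ∈ (0,1) and λ ∈ [0,1]. Let A : E → E be an invertible continuous linear map with ‖A^{−1}‖ ≤ 1, B : F → E with ‖B‖ ≤ δ, C : E → F with ‖C‖ ≤ 1, and D : F → F with ‖A^{−1}‖·‖D‖ ≤ λ, all continuous linear. For a continuous linear map ℓ : E → F with ‖ℓ‖ ≤ 1 define the graph transform Γ(ℓ) := (C + D∘ℓ) ∘ (A + B∘ℓ)^{−1} (the operator A + B∘ℓ is invertible since ‖A^{−1}∘B∘ℓ‖ ≤ δ < 1). Then for all continuous linear ℓ, ℓ' : E → F with ‖ℓ‖ ≤ 1 and ‖ℓ'‖ ≤ 1: ‖Γ(ℓ) − Γ(ℓ')‖ ≤ (λ + 2δ)(1 − δ)^{−2} ‖ℓ − ℓ'‖. -/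
set_option maxHeartbeats 1000000

open ContinuousLinearMap

theorem stmt9 {E F : Type*}
    [NormedAddCommGroup E] [NormedSpace ℝ E] [CompleteSpace E]
    [NormedAddCommGroup F] [NormedSpace ℝ F] [CompleteSpace F]
    (δ lam : ℝ) (hδ0 : 0 < δ) (hδ1 : δ < 1) (hlam0 : 0 ≤ lam) (hlam1 : lam ≤ 1)
    (A : E ≃L[ℝ] E) (hA : ‖(A.symm : E →L[ℝ] E)‖ ≤ 1)
    (B : F →L[ℝ] E) (hB : ‖B‖ ≤ δ)
    (C : E →L[ℝ] F) (hC : ‖C‖ ≤ 1)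
    (D : F →L[ℝ] F) (hD : ‖(A.symm : E →L[ℝ] E)‖ * ‖D‖ ≤ lam)
    -- the graph transform `Γ(ℓ) = (C + D∘ℓ) ∘ (A + B∘ℓ)⁻¹`
    (Γ : (E →L[ℝ] F) → (E →L[ℝ] F))
    (hΓ : ∀ ℓ : E →L[ℝ] F, ‖ℓ‖ ≤ 1 →
      Γ ℓ = (C + D.comp ℓ).comp (Ring.inverse ((A : E →L[ℝ] E) + B.comp ℓ))) :
    ∀ ℓ ℓ' : E →L[ℝ] F, ‖ℓ‖ ≤ 1 → ‖ℓ'‖ ≤ 1 →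
      ‖Γ ℓ - Γ ℓ'‖ ≤ (lam + 2 * δ) * ((1 - δ) ^ 2)⁻¹ * ‖ℓ - ℓ'‖ := by
  intro ℓ ℓ' hℓ hℓ'
  rcases subsingleton_or_nontrivial E with hE | hE
  · have : ℓ = ℓ' := Subsingleton.elim _ _
    subst this
    simp only [sub_self, norm_zero, mul_zero, le_refl]
  -- main case
  set a : ℝ := ‖(A.symm : E →L[ℝ] E)‖ with ha_def
  have ha0 : 0 ≤ a := norm_nonneg _
  set s : ℝ := (1 - δ)⁻¹ with hs_def
  have hδ' : (0:ℝ) < 1 - δ := by linarith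
  have hs1 : 1 ≤ s := by
    rw [hs_def]
    rw [le_inv_comm₀ (by linarith) (by linarith)]
    linarith
  have hs0 : 0 < s := by positivity
  -- key facts about M ℓ := A + B ∘ ℓ
  have key : ∀ m : E →L[ℝ] F, ‖m‖ ≤ 1 →
      IsUnit ((A : E →L[ℝ] E) + B.comp m) ∧
      ‖Ring.inverse ((A : E →L[ℝ] E) + B.comp m)‖ ≤ s * a := by
    intro m hm
    set t : E →L[ℝ] E := ((A.symm : E →L[ℝ] E)).comp (B.comp m) with ht_def
    have htn : ‖t‖ ≤ δ := by
      calc ‖t‖ ≤ a * ‖B.comp m‖ := opNorm_comp_le _ _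
        _ ≤ a * (‖B‖ * ‖m‖) := by
            exact mul_le_mul_of_nonneg_left (opNorm_comp_le _ _) ha0
        _ ≤ 1 * (δ * 1) := by
            apply mul_le_mul hA _ (by positivity) (by norm_num)
            exact mul_le_mul hB hm (norm_nonneg _) (by linarith)
        _ = δ := by ring
    have ht1 : ‖-t‖ < 1 := by rw [norm_neg]; linarith
    set w : (E →L[ℝ] E)ˣ := Units.oneSub (-t) ht1 with hw_def
    set u : (E →L[ℝ] E)ˣ := A.toUnit with hu_def
    have huw : ((u * w : (E →L[ℝ] E)ˣ) : E →L[ℝ] E) = (A : E →L[ℝ] E) + B.comp m := by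
      ext x
      simp [hw_def, hu_def, ContinuousLinearMap.mul_apply, Units.val_oneSub,
        ContinuousLinearEquiv.toUnit, sub_neg_eq_add, ht_def]
    constructor
    · exact ⟨u * w, huw⟩
    · rw [← huw, Ring.inverse_unit, mul_inv_rev, Units.val_mul]
      have hwinv : ‖((w⁻¹ : (E →L[ℝ] E)ˣ) : E →L[ℝ] E)‖ ≤ s := by
        have : ((w⁻¹ : (E →L[ℝ] E)ˣ) : E →L[ℝ] E) = ∑' n : ℕ, (-t) ^ n := rfl
        rw [this]
        calc ‖∑' n : ℕ, (-t) ^ n‖ ≤ ‖(1 : E →L[ℝ] E)‖ - 1 + (1 - ‖-t‖)⁻¹ :=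
              tsum_geometric_le_of_norm_lt_one _ ht1
          _ = (1 - ‖t‖)⁻¹ := by rw [norm_neg, ContinuousLinearMap.one_def, ContinuousLinearMap.norm_id]; ring
          _ ≤ s := by
              rw [hs_def]
              apply inv_anti₀ hδ'
              linarith
      have huinv : ((u⁻¹ : (E →L[ℝ] E)ˣ) : E →L[ℝ] E) = (A.symm : E →L[ℝ] E) := rfl
      calc ‖((w⁻¹ : (E →L[ℝ] E)ˣ) : E →L[ℝ] E) * ((u⁻¹ : (E →L[ℝ] E)ˣ) : E →L[ℝ] E)‖
          ≤ ‖((w⁻¹ : (E →L[ℝ] E)ˣ) : E →L[ℝ] E)‖ * ‖((u⁻¹ : (E →L[ℝ] E)ˣ) : E →L[ℝ] E)‖ :=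
            norm_mul_le _ _
        _ ≤ s * a := by
            rw [huinv]
            exact mul_le_mul_of_nonneg_right hwinv ha0
  obtain ⟨hM, hN⟩ := key ℓ hℓ
  obtain ⟨hM', hN'⟩ := key ℓ' hℓ'
  set N : E →L[ℝ] E := Ring.inverse ((A : E →L[ℝ] E) + B.comp ℓ) with hNdef
  set N' : E →L[ℝ] E := Ring.inverse ((A : E →L[ℝ] E) + B.comp ℓ') with hN'def
  have hres : N - N' = N * (B.comp (ℓ' - ℓ) * N') := by
    have h1 : ((A : E →L[ℝ] E) + B.comp ℓ') * N' = 1 := Ring.mul_inverse_cancel _ hM'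
    have h2 : N * ((A : E →L[ℝ] E) + B.comp ℓ) = 1 := Ring.inverse_mul_cancel _ hM
    have h3 : ((A : E →L[ℝ] E) + B.comp ℓ') - ((A : E →L[ℝ] E) + B.comp ℓ)
        = B.comp (ℓ' - ℓ) := by
      rw [ContinuousLinearMap.comp_sub]; abel
    calc N - N' = N * (((A : E →L[ℝ] E) + B.comp ℓ') * N')
          - (N * ((A : E →L[ℝ] E) + B.comp ℓ)) * N' := by rw [h1, h2, mul_one, one_mul]
      _ = N * ((((A : E →L[ℝ] E) + B.comp ℓ') - ((A : E →L[ℝ] E) + B.comp ℓ)) * N') := by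
          noncomm_ring
      _ = N * (B.comp (ℓ' - ℓ) * N') := by rw [h3]
  rw [hΓ ℓ hℓ, hΓ ℓ' hℓ', ← hNdef, ← hN'def]
  have hsplit : (C + D.comp ℓ).comp N - (C + D.comp ℓ').comp N'
      = (C + D.comp ℓ).comp (N - N') + (D.comp (ℓ - ℓ')).comp N' := by
    ext x
    simp only [ContinuousLinearMap.add_apply, ContinuousLinearMap.sub_apply,
      ContinuousLinearMap.comp_apply, map_sub]
    abel
  rw [hsplit]
  set d : ℝ := ‖ℓ - ℓ'‖ with hd_def
  have hd0 : 0 ≤ d := norm_nonneg _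
  set X : ℝ := ‖D‖ with hX_def
  have hX0 : 0 ≤ X := norm_nonneg _
  have hP : ‖C + D.comp ℓ‖ ≤ 1 + X := by
    calc ‖C + D.comp ℓ‖ ≤ ‖C‖ + ‖D.comp ℓ‖ := norm_add_le _ _
      _ ≤ 1 + X * 1 := by
          gcongr
          calc ‖D.comp ℓ‖ ≤ X * ‖ℓ‖ := opNorm_comp_le _ _
            _ ≤ X * 1 := by gcongr
      _ = 1 + X := by ring
  have hBd : ‖B.comp (ℓ' - ℓ)‖ ≤ δ * d := by
    calc ‖B.comp (ℓ' - ℓ)‖ ≤ ‖B‖ * ‖ℓ' - ℓ‖ := opNorm_comp_le _ _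
      _ = ‖B‖ * d := by rw [norm_sub_rev]
      _ ≤ δ * d := by gcongr
  have hDd : ‖D.comp (ℓ - ℓ')‖ ≤ X * d := opNorm_comp_le _ _
  have hNN' : ‖N - N'‖ ≤ (s * a) * ((δ * d) * (s * a)) := by
    rw [hres]
    calc ‖N * (B.comp (ℓ' - ℓ) * N')‖ ≤ ‖N‖ * ‖B.comp (ℓ' - ℓ) * N'‖ := norm_mul_le _ _
      _ ≤ ‖N‖ * (‖B.comp (ℓ' - ℓ)‖ * ‖N'‖) := by
          gcongr
          exact norm_mul_le _ _
      _ ≤ (s * a) * ((δ * d) * (s * a)) := by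
          gcongr
  have hs2 : ((1 - δ) ^ 2)⁻¹ = s ^ 2 := by rw [hs_def, inv_pow]
  rw [hs2]
  have e1 : a ^ 2 * (1 + X) ≤ 2 := by nlinarith [mul_nonneg ha0 hX0]
  have e2 : X * a ≤ lam := by nlinarith
  have hss : s ≤ s ^ 2 := by nlinarith
  calc ‖(C + D.comp ℓ).comp (N - N') + (D.comp (ℓ - ℓ')).comp N'‖
      ≤ ‖(C + D.comp ℓ).comp (N - N')‖ + ‖(D.comp (ℓ - ℓ')).comp N'‖ := norm_add_le _ _
    _ ≤ ‖C + D.comp ℓ‖ * ‖N - N'‖ + ‖D.comp (ℓ - ℓ')‖ * ‖N'‖ := by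
        gcongr <;> exact opNorm_comp_le _ _
    _ ≤ (1 + X) * ((s * a) * ((δ * d) * (s * a))) + (X * d) * (s * a) := by
        gcongr
    _ = (a ^ 2 * (1 + X)) * (δ * d * s ^ 2) + (X * a) * (d * s) := by ring
    _ ≤ 2 * (δ * d * s ^ 2) + lam * (d * s) := by
        gcongr
    _ ≤ 2 * (δ * d * s ^ 2) + lam * (d * s ^ 2) := by
        have : d * s ≤ d * s ^ 2 := by gcongr
        nlinarith
    _ = (lam + 2 * δ) * s ^ 2 * d := by ring
end

section
/- Let x = (x₁,x₂,x₃) ∈ ℝ³ satisfy x₂² + (x₃ − 28)² ≤ 12544/15 and 4.7644 · x₁² ≤ x₂² + x₃². Then x₂² + x₃² ≤ 3239.7, x₁² ≤ 680, and V := 2x₁² + x₂² + (x₃ − 28)² ≤ 2197. -/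
theorem stmt13 (x₁ x₂ x₃ : ℝ)
    (h1 : x₂ ^ 2 + (x₃ - 28) ^ 2 ≤ 12544 / 15)
    (h2 : 4.7644 * x₁ ^ 2 ≤ x₂ ^ 2 + x₃ ^ 2) :
    x₂ ^ 2 + x₃ ^ 2 ≤ 3239.7 ∧
    x₁ ^ 2 ≤ 680 ∧
    2 * x₁ ^ 2 + x₂ ^ 2 + (x₃ - 28) ^ 2 ≤ 2197 := by
  have hS : x₂ ^ 2 + x₃ ^ 2 ≤ 3239.7 := by
    nlinarith [sq_nonneg (x₃ - 28 - 289184/10000), sq_nonneg x₂]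
  have hx1 : x₁ ^ 2 ≤ 680 := by nlinarith
  exact ⟨hS, hx1, by nlinarith⟩
end

section
/- Let x = (x₁,x₂,x₃) ∈ ℝ³ satisfy x₂² + (x₃ − 28)² ≤ 12544/15 and 4.7644 · x₁² ≤ x₂² + x₃². Then the classical Lorenz vector field G satisfies, at x: div G(x) + 0.278 · ‖DG(x)‖₂ < 0, i.e. −41/3 + 0.278 · (201 + 64/9 + 2x₁² + x₂² + (x₃ − 28)²)^{1/2} < 0. (This is condition (b) of q-strong dissipativity with d_s = 1 and q = 1.278 on the region containing the Lorenz attractor.) -/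
theorem stmt14 (x₁ x₂ x₃ : ℝ)
    (h1 : x₂ ^ 2 + (x₃ - 28) ^ 2 ≤ 12544 / 15)
    (h2 : 4.7644 * x₁ ^ 2 ≤ x₂ ^ 2 + x₃ ^ 2) :
    -41/3 + 0.278 *
      Real.sqrt (201 + 64/9 + 2 * x₁ ^ 2 + x₂ ^ 2 + (x₃ - 28) ^ 2) < 0 := by
  have hA : 201 + 64/9 + 2 * x₁ ^ 2 + x₂ ^ 2 + (x₃ - 28) ^ 2 ≤ 2405 := by
    nlinarith [sq_nonneg (0.97 * (x₃ - 28) - 28), sq_nonneg x₂, sq_nonneg (x₃ - 28),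
      sq_nonneg x₁]
  have hs : Real.sqrt (201 + 64/9 + 2 * x₁ ^ 2 + x₂ ^ 2 + (x₃ - 28) ^ 2)
      ≤ Real.sqrt 2405 := Real.sqrt_le_sqrt hA
  have h49 : Real.sqrt 2405 < 49.05 := by
    rw [show (49.05 : ℝ) = Real.sqrt (49.05 ^ 2) by
      rw [Real.sqrt_sq]; norm_num]
    exact Real.sqrt_lt_sqrt (by norm_num) (by norm_num)
  linarith
end
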